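/- The quantization dimension of order 2 of the condensation measure P exists and equals κ := 2·log 2/(log 75 − log 2); that is, the sequence (2·log n)/(−log V_n(P)) converges to 2·log 2/(log 75 − log 2) as n → ∞. -/

import Mathlib

open MeasureTheory Metric Set Filter
open ENNReal

/-- The distortion error of a set `α` of quantizer points for `μ`, of order 2:
`∫ min_{a ∈ α} (x - a)^2 dμ(x)`. -/
noncomputable def distortion (μ : MeasureTheory.Measure ℝ) (α : Set ℝ) : ℝ :=
  ∫ x, (Metric.infDist x α) ^ 2 ∂μ

/-- The `n`th quantization error of order 2 for `μ`. -/
noncomputable def quantErr (μ : MeasureTheory.Measure ℝ) (n : ℕ) : ℝ :=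
  sInf {e : ℝ | ∃ α : Set ℝ, α.Finite ∧ α.Nonempty ∧ α.ncard ≤ n ∧ e = distortion μ α}

/-- `α` is an optimal set of `n`-means for `μ`. -/
def IsOptimalSet (μ : MeasureTheory.Measure ℝ) (n : ℕ) (α : Set ℝ) : Prop :=
  α.Finite ∧ α.Nonempty ∧ α.ncard ≤ n ∧ distortion μ α = quantErr μ n

/-- The similarity `S₁(x) = x/5`. -/
noncomputable def S1 : ℝ → ℝ := fun x => x / 5

/-- The similarity `S₂(x) = x/5 + 4/5`. -/
noncomputable def S2 : ℝ → ℝ := fun x => x / 5 + 4 / 5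

/-- `P` is the condensation measure associated with `(S₁, S₂; 1/3, 1/3, 1/3; ν)`:
`P = (1/3) P∘S₁⁻¹ + (1/3) P∘S₂⁻¹ + (1/3) ν`. -/
def IsCondensation (P ν : MeasureTheory.Measure ℝ) : Prop :=
  MeasureTheory.IsProbabilityMeasure P ∧
    P = (1 / 3 : ENNReal) • P.map S1 + (1 / 3 : ENNReal) • P.map S2 + (1 / 3 : ENNReal) • ν

/-- The point `a_{j+1} = 3/5 - 1/(5 · 2^j)` (so `aseq 0 = a₁ = 2/5`). -/
noncomputable def aseq (j : ℕ) : ℝ := 3 / 5 - 1 / (5 * 2 ^ j)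

/-- The infinite discrete distribution `ν = ∑_{j ≥ 1} 2^{-j} δ_{a_j}`. -/
noncomputable def nuDisc : MeasureTheory.Measure ℝ :=
  MeasureTheory.Measure.sum
    (fun j : ℕ => ((1 / 2 : ENNReal) ^ (j + 1)) • MeasureTheory.Measure.dirac (aseq j))

lemma S1meas : Measurable S1 := by
  have : Continuous S1 := by unfold S1; continuity
  exact this.measurable

lemma S2meas : Measurable S2 := by
  have : Continuous S2 := by unfold S2; continuity
  exact this.measurable

lemma two_pow_ge_one (j : ℕ) : (1:ℝ) ≤ 2 ^ j := by
  calc (1:ℝ) = 2 ^ 0 := by norm_num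
  _ ≤ 2 ^ j := by
    apply pow_le_pow_right₀ (by norm_num) (Nat.zero_le j)

lemma aseq_mem (j : ℕ) : aseq j ∈ Icc (0:ℝ) 1 := by
  have h2 := two_pow_ge_one j
  constructor
  · have h1 : (1:ℝ) / (5 * 2 ^ j) ≤ 1 / 5 := by
      apply one_div_le_one_div_of_le (by norm_num)
      nlinarith
    unfold aseq; linarith
  · have h3 : (0:ℝ) < 1 / (5 * 2 ^ j) := by positivity
    unfold aseq; linarith

lemma nuDisc_compl_Icc : nuDisc ((Icc (0:ℝ) 1)ᶜ) = 0 := by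
  unfold nuDisc
  rw [Measure.sum_apply _ (measurableSet_Icc.compl)]
  refine ENNReal.tsum_eq_zero.mpr fun j => ?_
  rw [Measure.smul_apply, Measure.dirac_apply' _ (measurableSet_Icc.compl)]
  have : aseq j ∉ (Icc (0:ℝ) 1)ᶜ := by simp [aseq_mem j]
  rw [Set.indicator_of_notMem this]
  simp

noncomputable def Ffun (α : Set ℝ) (x : ℝ) : ℝ≥0∞ := ENNReal.ofReal (infDist x α ^ 2)

lemma Ffun_meas (α : Set ℝ) : Measurable (Ffun α) :=
  (((continuous_infDist_pt α).pow 2)).measurable.ennreal_ofReal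

noncomputable def Lq (P : Measure ℝ) (α : Set ℝ) : ℝ≥0∞ := ∫⁻ x, Ffun α x ∂P

lemma distortion_eq (P : Measure ℝ) (α : Set ℝ) : distortion P α = (Lq P α).toReal := by
  unfold distortion Lq Ffun
  exact integral_eq_lintegral_of_nonneg_ae (ae_of_all _ (fun x => sq_nonneg _))
    ((continuous_infDist_pt α).pow 2).aestronglyMeasurable

lemma L_split {P : Measure ℝ} (hP : IsCondensation P nuDisc) (G : ℝ → ℝ≥0∞)
    (hG : Measurable G) :
    ∫⁻ x, G x ∂P = 1/3 * ∫⁻ x, G (S1 x) ∂P + 1/3 * ∫⁻ x, G (S2 x) ∂P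
      + 1/3 * ∫⁻ x, G x ∂nuDisc := by
  conv_lhs => rw [hP.2]
  rw [lintegral_add_measure, lintegral_add_measure, lintegral_smul_measure,
    lintegral_smul_measure, lintegral_smul_measure, lintegral_map hG S1meas,
    lintegral_map hG S2meas, smul_eq_mul, smul_eq_mul, smul_eq_mul]

lemma nu_lint (G : ℝ → ℝ≥0∞) (hG : Measurable G) :
    ∫⁻ x, G x ∂nuDisc = ∑' j : ℕ, (1/2 : ENNReal)^(j+1) * G (aseq j) := by
  unfold nuDisc
  rw [lintegral_sum_measure]
  exact tsum_congr fun j => by rw [lintegral_smul_measure, lintegral_dirac' _ hG, smul_eq_mul]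

lemma infDist_image_le {S : ℝ → ℝ} (hS : ∀ a b, dist (S a) (S b) = dist a b / 5)
    {β : Set ℝ} (hf : β.Finite) (hn : β.Nonempty) (x : ℝ) :
    infDist (S x) (S '' β) ≤ infDist x β / 5 := by
  obtain ⟨y, hy, hxy⟩ := hf.isCompact.exists_infDist_eq_dist hn x
  calc infDist (S x) (S '' β) ≤ dist (S x) (S y) := infDist_le_dist_of_mem (mem_image_of_mem S hy)
    _ = dist x y / 5 := hS x y
    _ = infDist x β / 5 := by rw [← hxy]

lemma S1_dist (a b : ℝ) : dist (S1 a) (S1 b) = dist a b / 5 := by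
  unfold S1
  rw [Real.dist_eq, Real.dist_eq, show a/5 - b/5 = (a-b)/5 by ring, abs_div]
  norm_num

lemma S2_dist (a b : ℝ) : dist (S2 a) (S2 b) = dist a b / 5 := by
  unfold S2
  rw [Real.dist_eq, Real.dist_eq, show a/5 + 4/5 - (b/5 + 4/5) = (a-b)/5 by ring, abs_div]
  norm_num


section
variable {P : Measure ℝ} (hP : IsCondensation P nuDisc)

include hP

lemma P_univ : P univ = 1 := hP.1.measure_univ

lemma P_eval (A : Set ℝ) (hA : MeasurableSet A) :
    P A = (1/3 : ENNReal) * P (S1 ⁻¹' A) + (1/3 : ENNReal) * P (S2 ⁻¹' A)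
      + (1/3 : ENNReal) * nuDisc A := by
  conv_lhs => rw [hP.2]
  rw [Measure.add_apply, Measure.add_apply, Measure.smul_apply, Measure.smul_apply,
    Measure.smul_apply, Measure.map_apply S1meas hA, Measure.map_apply S2meas hA]
  rfl

lemma P_ge_map1 (A : Set ℝ) (hA : MeasurableSet A) : (1/3 : ENNReal) * P (S1 ⁻¹' A) ≤ P A := by
  rw [P_eval hP A hA]; exact le_add_right (le_add_right le_rfl)

lemma P_ge_map2 (A : Set ℝ) (hA : MeasurableSet A) : (1/3 : ENNReal) * P (S2 ⁻¹' A) ≤ P A := by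
  rw [P_eval hP A hA]; exact le_add_right (le_add_left le_rfl)

lemma P_finite (A : Set ℝ) : P A ≠ ⊤ := by
  haveI := hP.1
  exact ((prob_le_one).trans_lt ENNReal.one_lt_top).ne

lemma P_supp : P ((Icc (0:ℝ) 1)ᶜ) = 0 := by
  set t := P ((Icc (0:ℝ) 1)ᶜ) with ht
  have htop : t ≠ ⊤ := P_finite hP _
  have pre1 : S1 ⁻¹' (Icc (0:ℝ) 1)ᶜ ⊆ (Icc (0:ℝ) 1)ᶜ := by
    intro x hx
    simp only [mem_compl_iff, mem_preimage, mem_Icc, not_and_or, not_le] at hx ⊢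
    unfold S1 at hx
    rcases hx with h | h
    · left; linarith
    · right; linarith
  have pre2 : S2 ⁻¹' (Icc (0:ℝ) 1)ᶜ ⊆ (Icc (0:ℝ) 1)ᶜ := by
    intro x hx
    simp only [mem_compl_iff, mem_preimage, mem_Icc, not_and_or, not_le] at hx ⊢
    unfold S2 at hx
    rcases hx with h | h
    · left; linarith
    · right; linarith
  have key : t ≤ (2/3 : ENNReal) * t := by
    calc t = (1/3 : ENNReal) * P (S1 ⁻¹' (Icc (0:ℝ) 1)ᶜ)
        + (1/3 : ENNReal) * P (S2 ⁻¹' (Icc (0:ℝ) 1)ᶜ)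
        + (1/3 : ENNReal) * nuDisc ((Icc (0:ℝ) 1)ᶜ) :=
          P_eval hP _ (measurableSet_Icc.compl)
      _ ≤ (1/3 : ENNReal) * t + (1/3 : ENNReal) * t + (1/3 : ENNReal) * 0 := by
          gcongr
          · exact measure_mono pre1
          · exact measure_mono pre2
          · exact le_of_eq nuDisc_compl_Icc
      _ = (2/3 : ENNReal) * t := by
          rw [mul_zero, add_zero, ← add_mul, ENNReal.div_add_div_same]
          norm_num
  -- conclude t = 0
  have hr : t.toReal ≤ (2/3 : ℝ) * t.toReal := by
    have h2 : ((2/3 : ENNReal) * t).toReal = (2/3 : ℝ) * t.toReal := by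
      rw [ENNReal.toReal_mul]
      norm_num
    calc t.toReal ≤ ((2/3 : ENNReal) * t).toReal := by
          apply ENNReal.toReal_mono _ key
          exact ENNReal.mul_ne_top (by
            intro h
            exact (ENNReal.div_lt_top (by norm_num) (by norm_num)).ne h) htop
      _ = (2/3 : ℝ) * t.toReal := h2
  have : t.toReal = 0 := by
    have := ENNReal.toReal_nonneg (a := t)
    linarith
  exact (ENNReal.toReal_eq_zero_iff t).mp this |>.resolve_right htop

end
noncomputable def gammaSet (k : ℕ) : Set ℝ := insert (3/5) (aseq '' (Set.Iio (2*k)))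

noncomputable def alphaSet : ℕ → Set ℝ
  | 0 => {1/2}
  | (k+1) => (S1 '' alphaSet k ∪ S2 '' alphaSet k) ∪ gammaSet (k+1)

lemma alphaSet_succ (k : ℕ) :
    alphaSet (k+1) = (S1 '' alphaSet k ∪ S2 '' alphaSet k) ∪ gammaSet (k+1) := rfl

lemma gamma_finite (k : ℕ) : (gammaSet k).Finite :=
  (((Set.finite_Iio _).image _).insert _)

lemma gamma_ncard (k : ℕ) : (gammaSet k).ncard ≤ 2*k+1 := by
  unfold gammaSet
  calc (insert (3/5 : ℝ) (aseq '' (Set.Iio (2*k)))).ncard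
      ≤ (aseq '' (Set.Iio (2*k))).ncard + 1 :=
        Set.ncard_insert_le _ _
    _ ≤ (Set.Iio (2*k)).ncard + 1 := by
        have := Set.ncard_image_le (s := Set.Iio (2*k)) (f := aseq) (Set.finite_Iio _)
        omega
    _ = 2*k+1 := by
        congr 1
        rw [← Finset.coe_range, Set.ncard_coe_finset, Finset.card_range]

lemma alpha_finite (k : ℕ) : (alphaSet k).Finite := by
  induction k with
  | zero => exact Set.finite_singleton _
  | succ k ih =>
    unfold alphaSet
    exact (((ih.image _).union (ih.image _)).union (gamma_finite _))

lemma alpha_nonempty (k : ℕ) : (alphaSet k).Nonempty := by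
  cases k with
  | zero => exact ⟨1/2, rfl⟩
  | succ k => exact ⟨3/5, Or.inr (Set.mem_insert _ _)⟩

lemma alpha_mem01 (k : ℕ) : ∃ a ∈ alphaSet k, a ∈ Icc (0:ℝ) 1 := by
  cases k with
  | zero => exact ⟨1/2, rfl, by norm_num⟩
  | succ k => exact ⟨3/5, Or.inr (Set.mem_insert _ _), by norm_num⟩

lemma alpha_ncard (k : ℕ) : (alphaSet k).ncard + (2*k+5) ≤ 6*2^k := by
  induction k with
  | zero => simp [alphaSet]
  | succ k ih =>
    have h1 : (alphaSet (k+1)).ncard ≤ 2 * (alphaSet k).ncard + (2*(k+1)+1) := by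
      rw [alphaSet_succ]
      calc ((S1 '' alphaSet k ∪ S2 '' alphaSet k) ∪ gammaSet (k+1)).ncard
          ≤ (S1 '' alphaSet k ∪ S2 '' alphaSet k).ncard + (gammaSet (k+1)).ncard :=
            Set.ncard_union_le _ _
        _ ≤ ((S1 '' alphaSet k).ncard + (S2 '' alphaSet k).ncard) + (gammaSet (k+1)).ncard := by
            have := Set.ncard_union_le (S1 '' alphaSet k) (S2 '' alphaSet k)
            omega
        _ ≤ 2 * (alphaSet k).ncard + (2*(k+1)+1) := by
            have h2 := Set.ncard_image_le (s := alphaSet k) (f := S1) (alpha_finite k)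
            have h3 := Set.ncard_image_le (s := alphaSet k) (f := S2) (alpha_finite k)
            have h4 := gamma_ncard (k+1)
            omega
    have : 2 * (6*2^k) = 6*2^(k+1) := by ring
    omega

lemma enn_ofReal_unit_div (n : ℕ) (hn : 0 < n) : ENNReal.ofReal ((1:ℝ)/n) = 1/(n:ENNReal) := by
  rw [ENNReal.ofReal_div_of_pos (by exact_mod_cast hn)]
  simp

lemma infDist_gamma_zero (k j : ℕ) (h : j < 2*k) : infDist (aseq j) (gammaSet k) = 0 :=
  infDist_zero_of_mem (Or.inr (Set.mem_image_of_mem _ h))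

lemma infDist_gamma_le (k j : ℕ) : infDist (aseq j) (gammaSet k) ≤ 1/(5*2^j) := by
  have h35 : (3/5 : ℝ) ∈ gammaSet k := Set.mem_insert _ _
  calc infDist (aseq j) (gammaSet k) ≤ dist (aseq j) (3/5) := infDist_le_dist_of_mem h35
    _ = 1/(5*2^j) := by
        rw [Real.dist_eq]
        unfold aseq
        have : (0:ℝ) < 1/(5*2^j) := by positivity
        rw [show (3/5 - 1/(5*2^j) - 3/5 : ℝ) = -(1/(5*2^j)) by ring, abs_neg,
          abs_of_pos this]

lemma nu_gamma_bound (k : ℕ) :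
    ∫⁻ x, Ffun (gammaSet k) x ∂nuDisc ≤ 2 * (1/64 : ℝ≥0∞)^k := by
  rw [nu_lint _ (Ffun_meas _)]
  set g : ℕ → ℝ≥0∞ := fun j => (1/2 : ℝ≥0∞)^(j+1) * Ffun (gammaSet k) (aseq j) with hg
  have hzero : ∀ j, j < 2*k → g j = 0 := by
    intro j hj
    simp only [hg, Ffun, infDist_gamma_zero k j hj]
    norm_num
  have hinj : Function.Injective (fun i : ℕ => i + 2*k) := add_left_injective _
  have hsupp : Function.support g ⊆ Set.range (fun i : ℕ => i + 2*k) := by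
    intro j hj
    by_contra hc
    apply hj
    apply hzero
    by_contra hc2
    exact hc ⟨j - 2*k, by show j - 2*k + 2*k = j; omega⟩
  rw [← Function.Injective.tsum_eq hinj hsupp]
  have hterm : ∀ i : ℕ, g (i + 2*k) ≤ (1/8 : ℝ≥0∞)^(i+2*k) := by
    intro i
    set j := i + 2*k
    have h1 : Ffun (gammaSet k) (aseq j) ≤ (1/4 : ℝ≥0∞)^j := by
      unfold Ffun
      have hd := infDist_gamma_le k j
      have hsq : infDist (aseq j) (gammaSet k) ^ 2 ≤ ((1:ℝ)/4)^j := by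
        have h2 : infDist (aseq j) (gammaSet k) ^ 2 ≤ (1/(5*2^j))^2 :=
          pow_le_pow_left₀ infDist_nonneg hd 2
        refine h2.trans ?_
        rw [div_pow, one_pow, div_pow, one_pow]
        apply one_div_le_one_div_of_le (by positivity)
        rw [mul_pow]
        have h4 : ((2:ℝ)^j)^2 = 4^j := by
          rw [← pow_mul, pow_mul']
          norm_num
        rw [h4]
        nlinarith [pow_pos (show (0:ℝ) < 4 by norm_num) j]
      calc ENNReal.ofReal (infDist (aseq j) (gammaSet k) ^ 2)
          ≤ ENNReal.ofReal (((1:ℝ)/4)^j) := ENNReal.ofReal_le_ofReal hsq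
        _ = (1/4 : ℝ≥0∞)^j := by
            rw [ENNReal.ofReal_pow (by norm_num),
              show ENNReal.ofReal ((1:ℝ)/4) = (1/4 : ℝ≥0∞) by
                rw [ENNReal.ofReal_div_of_pos (by norm_num)]; norm_num]
    calc g j ≤ (1/2 : ℝ≥0∞)^(j+1) * (1/4 : ℝ≥0∞)^j := by
          exact mul_le_mul_right h1 _
      _ ≤ (1/2 : ℝ≥0∞)^j * (1/4 : ℝ≥0∞)^j := by
          have hh : (1/2 : ℝ≥0∞)^(j+1) ≤ (1/2 : ℝ≥0∞)^j := by
            rw [pow_succ]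
            apply mul_le_of_le_one_right'
            rw [ENNReal.div_le_iff (by norm_num) (by norm_num)]
            norm_num
          exact mul_le_mul_left hh _
      _ = (1/8 : ℝ≥0∞)^j := by
          rw [← mul_pow]
          congr 1
          rw [one_div, one_div, one_div, ← ENNReal.mul_inv (by norm_num) (by norm_num)]
          norm_num
  calc ∑' i : ℕ, g (i + 2*k) ≤ ∑' i : ℕ, (1/8 : ℝ≥0∞)^(i+2*k) := ENNReal.tsum_le_tsum hterm
    _ = (∑' i : ℕ, (1/8 : ℝ≥0∞)^i) * (1/8 : ℝ≥0∞)^(2*k) := by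
        rw [← ENNReal.tsum_mul_right]
        exact tsum_congr fun i => by rw [pow_add]
    _ ≤ 2 * (1/64 : ℝ≥0∞)^k := by
        have hA : (∑' i : ℕ, (1/8 : ℝ≥0∞)^i) ≤ 2 := by
          rw [ENNReal.tsum_geometric]
          have h78 : (7:ℝ≥0∞)/8 + 1/8 = 1 := by
            rw [ENNReal.div_add_div_same, show (7:ℝ≥0∞)+1 = 8 by norm_num]
            exact ENNReal.div_self (by norm_num) (by norm_num)
          have h1 : (1:ℝ≥0∞) - 1/8 = 7/8 :=
            ENNReal.sub_eq_of_eq_add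
              (ENNReal.div_lt_top (by norm_num) (by norm_num)).ne h78.symm
          rw [h1, ENNReal.inv_div (by norm_num) (by norm_num),
            ENNReal.div_le_iff (by norm_num) (by norm_num)]
          norm_num
        have hB : (1/8 : ℝ≥0∞)^(2*k) = (1/64 : ℝ≥0∞)^k := by
          rw [pow_mul]
          congr 1
          rw [pow_two, one_div, ← ENNReal.mul_inv (by norm_num) (by norm_num)]
          norm_num
        exact mul_le_mul' hA (le_of_eq hB)
lemma enn13of : (1/3 : ℝ≥0∞) * (1/25) = 1/75 := by
  rw [one_div, one_div, one_div, ← ENNReal.mul_inv (by norm_num) (by norm_num)]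
  norm_num

section
variable {P : Measure ℝ} (hP : IsCondensation P nuDisc)
include hP

lemma Lq_le_sq {α : Set ℝ} {a0 : ℝ} (ha0 : a0 ∈ α) :
    Lq P α ≤ ENNReal.ofReal ((|a0|+1)^2) := by
  haveI := hP.1
  unfold Lq
  rw [← lintegral_add_compl (Ffun α) (measurableSet_Icc (a := (0:ℝ)) (b := 1)),
    setLIntegral_measure_zero _ _ (P_supp hP), add_zero]
  calc ∫⁻ x in Icc (0:ℝ) 1, Ffun α x ∂P
      ≤ ∫⁻ _x in Icc (0:ℝ) 1, ENNReal.ofReal ((|a0|+1)^2) ∂P := by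
        apply setLIntegral_mono measurable_const
        intro x hx
        unfold Ffun
        apply ENNReal.ofReal_le_ofReal
        have h1 : infDist x α ≤ dist x a0 := infDist_le_dist_of_mem ha0
        have h2 : dist x a0 ≤ |a0| + 1 := by
          rw [Real.dist_eq]
          rcases hx with ⟨hx0, hx1⟩
          rw [abs_le]
          rcases abs_le.mp (le_refl |a0|) with ⟨ha1, ha2⟩
          constructor <;> linarith
        calc infDist x α ^ 2 ≤ (|a0|+1)^2 := by
              apply pow_le_pow_left₀ infDist_nonneg (h1.trans h2)
          _ ≤ (|a0|+1)^2 := le_refl _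
    _ = ENNReal.ofReal ((|a0|+1)^2) * P (Icc (0:ℝ) 1) := setLIntegral_const _ _
    _ ≤ ENNReal.ofReal ((|a0|+1)^2) * 1 := by
        exact mul_le_mul_right prob_le_one _
    _ = ENNReal.ofReal ((|a0|+1)^2) := mul_one _

lemma Lq_ne_top {α : Set ℝ} (hn : α.Nonempty) : Lq P α ≠ ⊤ := by
  obtain ⟨a0, ha0⟩ := hn
  exact ((Lq_le_sq hP ha0).trans_lt ENNReal.ofReal_lt_top).ne

lemma Lq_le_one {α : Set ℝ} (h : ∃ a ∈ α, a ∈ Icc (0:ℝ) 1) : Lq P α ≤ 1 := by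
  haveI := hP.1
  obtain ⟨a0, ha0, ha01⟩ := h
  unfold Lq
  rw [← lintegral_add_compl (Ffun α) (measurableSet_Icc (a := (0:ℝ)) (b := 1)),
    setLIntegral_measure_zero _ _ (P_supp hP), add_zero]
  calc ∫⁻ x in Icc (0:ℝ) 1, Ffun α x ∂P
      ≤ ∫⁻ _x in Icc (0:ℝ) 1, 1 ∂P := by
        apply setLIntegral_mono measurable_const
        intro x hx
        unfold Ffun
        calc ENNReal.ofReal (infDist x α ^ 2) ≤ ENNReal.ofReal 1 := by
              apply ENNReal.ofReal_le_ofReal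
              apply pow_le_one₀ infDist_nonneg
              have h1 : infDist x α ≤ dist x a0 := infDist_le_dist_of_mem ha0
              refine h1.trans ?_
              rw [Real.dist_eq, abs_le]
              rcases hx with ⟨hx0, hx1⟩
              rcases ha01 with ⟨ha0', ha1'⟩
              constructor <;> linarith
          _ = 1 := ENNReal.ofReal_one
    _ = 1 * P (Icc (0:ℝ) 1) := setLIntegral_const _ _
    _ ≤ 1 := by rw [one_mul]; exact prob_le_one

lemma L_rec (k : ℕ) :
    Lq P (alphaSet (k+1)) ≤ 2/75 * Lq P (alphaSet k) + (1/64 : ℝ≥0∞)^(k+1) := by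
  have hofR25 : ENNReal.ofReal ((1:ℝ)/25) = (1/25 : ℝ≥0∞) := by
    rw [ENNReal.ofReal_div_of_pos (by norm_num)]; norm_num
  have key1 : ∀ (S : ℝ → ℝ), (∀ a b, dist (S a) (S b) = dist a b / 5) →
      S '' alphaSet k ⊆ alphaSet (k+1) →
      ∫⁻ x, Ffun (alphaSet (k+1)) (S x) ∂P ≤ 1/25 * Lq P (alphaSet k) := by
    intro S hdist hsub
    have hpt : ∀ x, Ffun (alphaSet (k+1)) (S x) ≤ 1/25 * Ffun (alphaSet k) x := by
      intro x
      have h1 : infDist (S x) (alphaSet (k+1)) ≤ infDist x (alphaSet k) / 5 :=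
        calc infDist (S x) (alphaSet (k+1)) ≤ infDist (S x) (S '' alphaSet k) :=
            infDist_le_infDist_of_subset hsub ((alpha_nonempty k).image S)
          _ ≤ infDist x (alphaSet k) / 5 :=
            infDist_image_le hdist (alpha_finite k) (alpha_nonempty k) x
      unfold Ffun
      calc ENNReal.ofReal (infDist (S x) (alphaSet (k+1)) ^ 2)
          ≤ ENNReal.ofReal ((1/25) * infDist x (alphaSet k)^2) := by
            apply ENNReal.ofReal_le_ofReal
            have h2 := pow_le_pow_left₀ infDist_nonneg h1 2
            rw [div_pow] at h2
            norm_num at h2 ⊢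
            linarith
        _ = 1/25 * ENNReal.ofReal (infDist x (alphaSet k)^2) := by
            rw [ENNReal.ofReal_mul (by norm_num), hofR25]
    calc ∫⁻ x, Ffun (alphaSet (k+1)) (S x) ∂P
        ≤ ∫⁻ x, 1/25 * Ffun (alphaSet k) x ∂P := lintegral_mono hpt
      _ = 1/25 * Lq P (alphaSet k) := lintegral_const_mul _ (Ffun_meas _)
  have key3 : ∫⁻ x, Ffun (alphaSet (k+1)) x ∂nuDisc ≤ 2*(1/64 : ℝ≥0∞)^(k+1) := by
    refine le_trans (lintegral_mono fun x => ?_) (nu_gamma_bound (k+1))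
    unfold Ffun
    apply ENNReal.ofReal_le_ofReal
    apply pow_le_pow_left₀ infDist_nonneg
    refine infDist_le_infDist_of_subset ?_ ⟨3/5, Set.mem_insert _ _⟩
    rw [alphaSet_succ]
    exact Set.subset_union_right
  have hs1 : S1 '' alphaSet k ⊆ alphaSet (k+1) := by
    rw [alphaSet_succ]
    exact (Set.subset_union_left).trans Set.subset_union_left
  have hs2 : S2 '' alphaSet k ⊆ alphaSet (k+1) := by
    rw [alphaSet_succ]
    exact (Set.subset_union_right).trans Set.subset_union_left
  have hsp := L_split hP (Ffun (alphaSet (k+1))) (Ffun_meas _)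
  have h1 := key1 S1 S1_dist hs1
  have h2 := key1 S2 S2_dist hs2
  set A := Lq P (alphaSet k) with hA
  set c := (1/64 : ℝ≥0∞)^(k+1) with hc
  have part1 : (1/3 : ℝ≥0∞)*(1/25*A) + (1/3 : ℝ≥0∞)*(1/25*A) ≤ 2/75*A := by
    have hm : (1/3:ℝ≥0∞)*(1/25*A) = 1/75*A := by rw [← mul_assoc, enn13of]
    rw [hm, ← add_mul, ENNReal.div_add_div_same]
    exact mul_le_mul_left (le_of_eq (by norm_num)) _
  have part2 : (1/3 : ℝ≥0∞)*(2*c) ≤ c := by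
    have h23 : (1/3 : ℝ≥0∞) * 2 ≤ 1 := by
      rw [one_div, mul_comm, ← div_eq_mul_inv,
        ENNReal.div_le_iff (by norm_num) (by norm_num)]
      norm_num
    calc (1/3 : ℝ≥0∞) * (2*c) = (1/3*2)*c := by rw [mul_assoc]
      _ ≤ 1 * c := mul_le_mul_left h23 _
      _ = c := one_mul _
  calc Lq P (alphaSet (k+1))
      = 1/3 * ∫⁻ x, Ffun (alphaSet (k+1)) (S1 x) ∂P
        + 1/3 * ∫⁻ x, Ffun (alphaSet (k+1)) (S2 x) ∂P
        + 1/3 * ∫⁻ x, Ffun (alphaSet (k+1)) x ∂nuDisc := hsp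
    _ ≤ (1/3 : ℝ≥0∞)*(1/25*A) + (1/3 : ℝ≥0∞)*(1/25*A) + (1/3 : ℝ≥0∞)*(2*c) :=
        add_le_add (add_le_add (mul_le_mul_right h1 _) (mul_le_mul_right h2 _))
          (mul_le_mul_right key3 _)
    _ ≤ 2/75*A + c := add_le_add part1 part2

end
lemma toReal_275 : ((2:ℝ≥0∞)/75).toReal = (2/75 : ℝ) := by
  rw [ENNReal.toReal_div]; simp
lemma toReal_164 : ((1:ℝ≥0∞)/64).toReal = (1/64 : ℝ) := by
  rw [ENNReal.toReal_div]; simp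
lemma enn275_ne_top : (2:ℝ≥0∞)/75 ≠ ⊤ := (ENNReal.div_lt_top (by norm_num) (by norm_num)).ne
lemma enn164_ne_top : (1:ℝ≥0∞)/64 ≠ ⊤ := (ENNReal.div_lt_top (by norm_num) (by norm_num)).ne

lemma distortion_nonneg (μ : Measure ℝ) (α : Set ℝ) : 0 ≤ distortion μ α := by
  rw [distortion_eq]; exact ENNReal.toReal_nonneg

lemma quant_bdd (μ : Measure ℝ) (n : ℕ) :
    BddBelow {e : ℝ | ∃ α : Set ℝ, α.Finite ∧ α.Nonempty ∧ α.ncard ≤ n ∧ e = distortion μ α} := by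
  refine ⟨0, ?_⟩
  rintro e ⟨α, h1, h2, h3, rfl⟩
  exact distortion_nonneg μ α

lemma quant_nonempty (μ : Measure ℝ) {n : ℕ} (hn : 1 ≤ n) :
    Set.Nonempty {e : ℝ | ∃ α : Set ℝ, α.Finite ∧ α.Nonempty ∧ α.ncard ≤ n ∧ e = distortion μ α} :=
  ⟨distortion μ {0}, {0}, Set.finite_singleton 0, Set.singleton_nonempty 0, by
    rw [Set.ncard_singleton]; omega, rfl⟩

lemma quantErr_le (μ : Measure ℝ) {n : ℕ} {α : Set ℝ} (h1 : α.Finite) (h2 : α.Nonempty)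
    (h3 : α.ncard ≤ n) : quantErr μ n ≤ distortion μ α :=
  csInf_le (quant_bdd μ n) ⟨α, h1, h2, h3, rfl⟩

lemma le_quantErr (μ : Measure ℝ) {b : ℝ} {n : ℕ} (hn : 1 ≤ n)
    (h : ∀ α : Set ℝ, α.Finite → α.Nonempty → α.ncard ≤ n → b ≤ distortion μ α) :
    b ≤ quantErr μ n := by
  refine le_csInf (quant_nonempty μ hn) ?_
  rintro e ⟨α, h1, h2, h3, rfl⟩
  exact h α h1 h2 h3

lemma quantErr_anti (μ : Measure ℝ) {m n : ℕ} (hm : 1 ≤ m) (h : m ≤ n) :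
    quantErr μ n ≤ quantErr μ m := by
  refine csInf_le_csInf (quant_bdd μ n) (quant_nonempty μ hm) ?_
  rintro e ⟨α, h1, h2, h3, rfl⟩
  exact ⟨α, h1, h2, h3.trans h, rfl⟩

section
variable {P : Measure ℝ} (hP : IsCondensation P nuDisc)
include hP

lemma eseq_rec (k : ℕ) : distortion P (alphaSet (k+1))
    ≤ 2/75 * distortion P (alphaSet k) + (1/64 : ℝ)^(k+1) := by
  have hL := L_rec hP k
  have hfin1 : (2:ℝ≥0∞)/75 * Lq P (alphaSet k) ≠ ⊤ :=
    ENNReal.mul_ne_top enn275_ne_top (Lq_ne_top hP (alpha_nonempty k))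
  have hfin2 : ((1:ℝ≥0∞)/64)^(k+1) ≠ ⊤ := ENNReal.pow_ne_top enn164_ne_top
  have hmono := ENNReal.toReal_mono (ENNReal.add_ne_top.mpr ⟨hfin1, hfin2⟩) hL
  rw [distortion_eq, distortion_eq]
  refine hmono.trans (le_of_eq ?_)
  rw [ENNReal.toReal_add hfin1 hfin2, ENNReal.toReal_mul, ENNReal.toReal_pow,
    toReal_275, toReal_164]

lemma eseq_bound (k : ℕ) :
    distortion P (alphaSet k) ≤ 3*(2/75 : ℝ)^k - 2*(1/64 : ℝ)^k := by
  induction k with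
  | zero =>
    have h1 : Lq P (alphaSet 0) ≤ 1 := Lq_le_one hP (alpha_mem01 0)
    have := ENNReal.toReal_mono ENNReal.one_ne_top h1
    rw [ENNReal.toReal_one] at this
    rw [distortion_eq]
    norm_num
    linarith
  | succ k ih =>
    have hr := eseq_rec hP k
    have hY : (0:ℝ) ≤ (1/64 : ℝ)^k := by positivity
    have e1 : (2/75 : ℝ)^(k+1) = (2/75 : ℝ)^k * (2/75) := pow_succ _ _
    have e2 : (1/64 : ℝ)^(k+1) = (1/64 : ℝ)^k * (1/64) := pow_succ _ _
    rw [e1, e2]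
    rw [e2] at hr
    nlinarith [hr, ih]

lemma quantErr_upper (k : ℕ) : quantErr P (6*2^k) ≤ 3*(2/75 : ℝ)^k := by
  have hc : (alphaSet k).ncard ≤ 6*2^k := by
    have := alpha_ncard k; omega
  refine (quantErr_le P (alpha_finite k) (alpha_nonempty k) hc).trans ?_
  refine (eseq_bound hP k).trans ?_
  have hY : (0:ℝ) ≤ (1/64 : ℝ)^k := by positivity
  linarith

end
noncomputable def lft : (k : ℕ) → (Fin k → Bool) → ℝ
  | 0, _ => 0
  | (k+1), f => (if f 0 then (4:ℝ)/5 else 0) + lft k (Fin.tail f) / 5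

noncomputable def cell (k : ℕ) (f : Fin k → Bool) : Set ℝ :=
  Icc (lft k f) (lft k f + (1/5:ℝ)^k)

lemma lft_bounds : ∀ (k : ℕ) (f : Fin k → Bool), 0 ≤ lft k f ∧ lft k f + (1/5:ℝ)^k ≤ 1 := by
  intro k
  induction k with
  | zero => intro f; simp [lft]
  | succ k ih =>
    intro f
    obtain ⟨h1, h2⟩ := ih (Fin.tail f)
    have hp : (1/5:ℝ)^(k+1) = (1/5:ℝ)^k/5 := by rw [pow_succ]; ring
    cases hf0 : f 0 <;> simp only [lft, hf0] <;> constructor <;>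
      simp only [if_true, if_false, Bool.false_eq_true] <;> try rw [hp]
    · linarith
    · linarith
    · linarith
    · linarith

lemma cell_nonempty (k : ℕ) (f : Fin k → Bool) : (cell k f).Nonempty := by
  rw [cell, Set.nonempty_Icc]
  have : (0:ℝ) ≤ (1/5:ℝ)^k := by positivity
  linarith

lemma cell_preimage (k : ℕ) (f : Fin (k+1) → Bool) :
    (if f 0 then S2 else S1) ⁻¹' (cell (k+1) f) = cell k (Fin.tail f) := by
  have hp : (1/5:ℝ)^(k+1) = (1/5:ℝ)^k/5 := by rw [pow_succ]; ring
  ext x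
  cases hf0 : f 0 <;>
    simp only [hf0, if_true, if_false, Bool.false_eq_true, cell, lft, Set.mem_preimage,
      Set.mem_Icc, S1, S2, hp] <;>
    constructor <;> intro ⟨ha, hb⟩ <;> constructor <;> linarith

lemma lft_sep : ∀ (k : ℕ) (f g : Fin k → Bool), f ≠ g →
    4*(1/5:ℝ)^k ≤ |lft k f - lft k g| := by
  intro k
  induction k with
  | zero =>
    intro f g h
    exact absurd (funext fun i => i.elim0) h
  | succ k ih =>
    intro f g h
    have h5pos : (0:ℝ) < (1/5:ℝ)^k := by positivity
    have hple : (1/5:ℝ)^(k+1) ≤ 1/5 := by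
      calc (1/5:ℝ)^(k+1) ≤ (1/5:ℝ)^1 :=
        pow_le_pow_of_le_one (by norm_num) (by norm_num) (by omega)
      _ = 1/5 := pow_one _
    have hp : (1/5:ℝ)^(k+1) = (1/5:ℝ)^k/5 := by rw [pow_succ]; ring
    by_cases h0 : f 0 = g 0
    · have htail : Fin.tail f ≠ Fin.tail g := by
        intro hte
        apply h
        have hf := Fin.cons_self_tail f
        have hg := Fin.cons_self_tail g
        rw [← hf, ← hg, h0, hte]
      have hd : lft (k+1) f - lft (k+1) g = (lft k (Fin.tail f) - lft k (Fin.tail g))/5 := by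
        simp only [lft, h0]
        ring
      rw [hd, abs_div]
      have := ih (Fin.tail f) (Fin.tail g) htail
      rw [hp]
      have h5 : |(5:ℝ)| = 5 := by norm_num
      rw [h5]
      linarith
    · -- heads differ
      obtain ⟨hf1, hf2⟩ := lft_bounds k (Fin.tail f)
      obtain ⟨hg1, hg2⟩ := lft_bounds k (Fin.tail g)
      have habs : ∀ (u v : Fin (k+1) → Bool), u 0 = true → v 0 = false →
          4*(1/5:ℝ)^(k+1) ≤ lft (k+1) u - lft (k+1) v := by
        intro u v hu hv
        obtain ⟨hu1, hu2⟩ := lft_bounds k (Fin.tail u)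
        obtain ⟨hv1, hv2⟩ := lft_bounds k (Fin.tail v)
        simp only [lft, hu, hv, if_true, if_false, Bool.false_eq_true]
        rw [hp] at *
        linarith
      cases hf0 : f 0 <;> cases hg0 : g 0
      · rw [hf0, hg0] at h0; exact absurd rfl h0
      · have := habs g f hg0 hf0
        rw [abs_sub_comm]
        exact this.trans (le_abs_self _)
      · exact (habs f g hf0 hg0).trans (le_abs_self _)
      · rw [hf0, hg0] at h0; exact absurd rfl h0

lemma cell_sep_points (k : ℕ) {f g : Fin k → Bool} (h : f ≠ g) {x y : ℝ}
    (hx : x ∈ cell k f) (hy : y ∈ cell k g) : 3*(1/5:ℝ)^k ≤ |x - y| := by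
  have hs := lft_sep k f g h
  obtain ⟨hx1, hx2⟩ := hx
  obtain ⟨hy1, hy2⟩ := hy
  rcases le_abs.mp hs with hc | hc
  · have : 3*(1/5:ℝ)^k ≤ x - y := by linarith
    exact this.trans (le_abs_self _)
  · have : 3*(1/5:ℝ)^k ≤ y - x := by linarith
    calc 3*(1/5:ℝ)^k ≤ y - x := this
      _ ≤ |y - x| := le_abs_self _
      _ = |x - y| := abs_sub_comm _ _

lemma cell_disjoint (k : ℕ) {f g : Fin k → Bool} (h : f ≠ g) :
    Disjoint (cell k f) (cell k g) := by
  rw [Set.disjoint_left]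
  intro x hxf hxg
  have := cell_sep_points k h hxf hxg
  simp only [sub_self, abs_zero] at this
  have h5pos : (0:ℝ) < (1/5:ℝ)^k := by positivity
  linarith

lemma le_infDist_of {x r : ℝ} {s : Set ℝ} (hs : s.Nonempty) (h : ∀ y ∈ s, r ≤ dist x y) :
    r ≤ infDist x s := by
  by_contra hc
  push_neg at hc
  obtain ⟨y, hy, hlt⟩ := (infDist_lt_iff hs).mp hc
  exact absurd (h y hy) (not_le.mpr hlt)

section
variable {P : Measure ℝ} (hP : IsCondensation P nuDisc)
include hP

lemma P_Icc01 : P (Icc (0:ℝ) 1) = 1 := by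
  have h := measure_add_measure_compl (μ := P) (measurableSet_Icc (a := (0:ℝ)) (b := 1))
  rw [P_supp hP, add_zero, P_univ hP] at h
  exact h

lemma cell_measure : ∀ (k : ℕ) (f : Fin k → Bool), (1/3 : ℝ≥0∞)^k ≤ P (cell k f) := by
  intro k
  induction k with
  | zero =>
    intro f
    have : cell 0 f = Icc (0:ℝ) 1 := by
      simp [cell, lft]
    rw [this, P_Icc01 hP, pow_zero]
  | succ k ih =>
    intro f
    have hpre := cell_preimage k f
    have hMeas : MeasurableSet (cell (k+1) f) := measurableSet_Icc
    cases hf0 : f 0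
    · rw [hf0] at hpre
      simp only [Bool.false_eq_true, if_false] at hpre
      have h1 := P_ge_map1 hP (cell (k+1) f) hMeas
      rw [hpre] at h1
      calc (1/3:ℝ≥0∞)^(k+1) = 1/3 * (1/3:ℝ≥0∞)^k := by rw [pow_succ]; ring
        _ ≤ 1/3 * P (cell k (Fin.tail f)) := mul_le_mul_right (ih _) _
        _ ≤ P (cell (k+1) f) := h1
    · rw [hf0] at hpre
      simp only [if_true] at hpre
      have h1 := P_ge_map2 hP (cell (k+1) f) hMeas
      rw [hpre] at h1
      calc (1/3:ℝ≥0∞)^(k+1) = 1/3 * (1/3:ℝ≥0∞)^k := by rw [pow_succ]; ring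
        _ ≤ 1/3 * P (cell k (Fin.tail f)) := mul_le_mul_right (ih _) _
        _ ≤ P (cell (k+1) f) := h1

end
section
variable {P : Measure ℝ} (hP : IsCondensation P nuDisc)
include hP

lemma distortion_lower {n k : ℕ} (hnk : 2*n ≤ 2^k) {α : Set ℝ} (hfin : α.Finite)
    (hne : α.Nonempty) (hcard : α.ncard ≤ n) :
    (1/8 : ℝ)*(2/75:ℝ)^k ≤ distortion P α := by
  classical
  set h : ℝ := (1/5:ℝ)^k with hh
  have hpos : 0 < h := by rw [hh]; positivity
  set r : ℝ := h/2 with hr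
  set Pgood : (Fin k → Bool) → Prop := fun f => ∃ a ∈ α, infDist a (cell k f) ≤ r with hPgood
  set good : Finset (Fin k → Bool) := Finset.univ.filter Pgood with hgood
  set bad : Finset (Fin k → Bool) := Finset.univ.filter (fun f => ¬ Pgood f) with hbad
  set pick : (Fin k → Bool) → ℝ := fun f => if hp : Pgood f then hp.choose else 0 with hpick
  have hpick_mem : ∀ f, Pgood f → pick f ∈ α ∧ infDist (pick f) (cell k f) ≤ r := by
    intro f hp
    rw [hpick]
    simp only [dif_pos hp]
    exact ⟨hp.choose_spec.1, hp.choose_spec.2⟩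
  -- good count
  have hgoodcard : good.card ≤ n := by
    have hinj : Set.InjOn pick ↑good := by
      intro f hf g hg heq
      by_contra hne'
      have hpf := hpick_mem f (Finset.mem_filter.mp hf).2
      have hpg := hpick_mem g (Finset.mem_filter.mp hg).2
      obtain ⟨yf, hyf, hdf⟩ := (isCompact_Icc).exists_infDist_eq_dist (cell_nonempty k f) (pick f)
      obtain ⟨yg, hyg, hdg⟩ := (isCompact_Icc).exists_infDist_eq_dist (cell_nonempty k g) (pick g)
      have h3 : 3*h ≤ |yf - yg| := cell_sep_points k hne' hyf hyg
      have hd1 : dist (pick f) yf ≤ r := by rw [← hdf]; exact hpf.2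
      have hd2 : dist (pick g) yg ≤ r := by rw [← hdg]; exact hpg.2
      have hdd : dist yf yg ≤ 2*r := by
        calc dist yf yg ≤ dist yf (pick f) + dist (pick f) yg := dist_triangle _ _ _
          _ = dist (pick f) yf + dist (pick g) yg := by rw [dist_comm, heq]
          _ ≤ 2*r := by linarith
      rw [Real.dist_eq] at hdd
      rw [hr] at hdd
      linarith
    have hmaps : ∀ f ∈ good, pick f ∈ hfin.toFinset := by
      intro f hf
      rw [Set.Finite.mem_toFinset]
      exact (hpick_mem f (Finset.mem_filter.mp hf).2).1
    calc good.card ≤ hfin.toFinset.card := Finset.card_le_card_of_injOn pick hmaps hinj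
      _ = α.ncard := (Set.ncard_eq_toFinset_card α hfin).symm
      _ ≤ n := hcard
  have hbadcard : 2^k ≤ 2 * bad.card := by
    have hsplit : good.card + bad.card = 2^k := by
      rw [hgood, hbad]
      rw [Finset.card_filter_add_card_filter_not]
      rw [Finset.card_univ]
      simp [Fintype.card_fun]
    omega
  -- lintegral lower bound
  set U : Set ℝ := ⋃ f ∈ bad, cell k f with hU
  have hUmeas : ∀ f ∈ bad, MeasurableSet (cell k f) := fun f _ => measurableSet_Icc
  have hPU : (bad.card : ℝ≥0∞) * (1/3:ℝ≥0∞)^k ≤ P U := by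
    rw [hU, measure_biUnion_finset ?disj hUmeas]
    · calc (bad.card : ℝ≥0∞) * (1/3:ℝ≥0∞)^k = bad.card • (1/3:ℝ≥0∞)^k := by
            rw [nsmul_eq_mul]
        _ ≤ ∑ f ∈ bad, P (cell k f) :=
            Finset.card_nsmul_le_sum bad _ _ (fun f _ => cell_measure hP k f)
    case disj =>
      intro f hf g hg hfg
      exact cell_disjoint k hfg
  have hpt : ∀ x ∈ U, ENNReal.ofReal (r^2) ≤ Ffun α x := by
    intro x hx
    rw [hU] at hx
    simp only [Set.mem_iUnion] at hx
    obtain ⟨f, hfbad, hxf⟩ := hx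
    have hnp : ¬ Pgood f := (Finset.mem_filter.mp hfbad).2
    simp only [hPgood, not_exists, not_and, not_le] at hnp
    have hxd : r ≤ infDist x α := by
      apply le_infDist_of hne
      intro y hy
      have h1 : infDist y (cell k f) ≤ dist y x := infDist_le_dist_of_mem hxf
      have h2 := hnp y hy
      rw [dist_comm]
      linarith
    unfold Ffun
    apply ENNReal.ofReal_le_ofReal
    apply pow_le_pow_left₀ (by rw [hr]; linarith) hxd
  have hLq : ENNReal.ofReal (r^2) * ((bad.card : ℝ≥0∞) * (1/3:ℝ≥0∞)^k) ≤ Lq P α := by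
    calc ENNReal.ofReal (r^2) * ((bad.card : ℝ≥0∞) * (1/3:ℝ≥0∞)^k)
        ≤ ENNReal.ofReal (r^2) * P U := mul_le_mul_right hPU _
      _ = ∫⁻ _x in U, ENNReal.ofReal (r^2) ∂P := (setLIntegral_const _ _).symm
      _ ≤ ∫⁻ x in U, Ffun α x ∂P := setLIntegral_mono (Ffun_meas α) hpt
      _ ≤ ∫⁻ x, Ffun α x ∂P := lintegral_mono' Measure.restrict_le_self le_rfl
      _ = Lq P α := rfl
  -- to reals
  have hfin3 : ((1/3:ℝ≥0∞)^k).toReal = (1/3:ℝ)^k := by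
    rw [ENNReal.toReal_pow, ENNReal.toReal_div]
    simp
  have hreal : r^2 * ((bad.card : ℝ) * (1/3:ℝ)^k) ≤ distortion P α := by
    have hm := ENNReal.toReal_mono (Lq_ne_top hP hne) hLq
    rw [distortion_eq]
    refine le_trans (le_of_eq ?_) hm
    rw [ENNReal.toReal_mul, ENNReal.toReal_mul, hfin3, ENNReal.toReal_ofReal (by positivity),
      ENNReal.toReal_natCast]
  refine le_trans ?_ hreal
  -- arithmetic
  have hN : ((2:ℝ))^k ≤ 2 * (bad.card : ℝ) := by
    have := hbadcard
    push_cast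
    calc ((2:ℝ))^k = ((2^k : ℕ) : ℝ) := by push_cast; ring
      _ ≤ ((2 * bad.card : ℕ) : ℝ) := by exact_mod_cast this
      _ = 2 * (bad.card : ℝ) := by push_cast; ring
  have hXY : (2/75:ℝ)^k = 2^k * (h^2 * (1/3:ℝ)^k) := by
    rw [hh, ← pow_mul, mul_comm k 2, pow_mul, ← mul_pow, ← mul_pow]
    norm_num
  rw [hXY, hr]
  have hpos2 : (0:ℝ) ≤ h^2*(1/3:ℝ)^k := by positivity
  have hq : (1/8:ℝ) * (2^k * (h ^ 2 * (1/3:ℝ)^k)) = ((1/8) * 2^k) * (h^2*(1/3:ℝ)^k) := by ring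
  have hq2 : (h/2)^2 * ((bad.card:ℝ) * (1/3:ℝ)^k) = ((1/4)*(bad.card:ℝ)) * (h^2*(1/3:ℝ)^k) := by
    ring
  rw [hq, hq2]
  apply mul_le_mul_of_nonneg_right _ hpos2
  linarith

end
section
variable {P : Measure ℝ} (hP : IsCondensation P nuDisc)
include hP

lemma quantErr_lower {n k : ℕ} (hn : 1 ≤ n) (hnk : 2*n ≤ 2^k) :
    (1/8 : ℝ)*(2/75:ℝ)^k ≤ quantErr P n :=
  le_quantErr P hn (fun _α h1 h2 h3 => distortion_lower hP hnk h1 h2 h3)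

end

lemma tendsto_affine_ratio (a b c d : ℝ) (hc : c ≠ 0) :
    Tendsto (fun m : ℕ => (a*m + b)/(c*m + d)) atTop (nhds (a/c)) := by
  have h0 : Tendsto (fun m : ℕ => 1/(m:ℝ)) atTop (nhds 0) :=
    tendsto_one_div_atTop_nhds_zero_nat
  have hnum : Tendsto (fun m : ℕ => a + b*(1/(m:ℝ))) atTop (nhds a) := by
    have := h0.const_mul b
    have h2 := tendsto_const_nhds (x := a) (f := atTop (α := ℕ)) |>.add this
    simpa using h2
  have hden : Tendsto (fun m : ℕ => c + d*(1/(m:ℝ))) atTop (nhds c) := by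
    have := h0.const_mul d
    have h2 := tendsto_const_nhds (x := c) (f := atTop (α := ℕ)) |>.add this
    simpa using h2
  have hdiv := hnum.div hden hc
  refine hdiv.congr' ?_
  filter_upwards [eventually_ge_atTop 1] with m hm
  have hm0 : (m:ℝ) ≠ 0 := by
    have : (1:ℝ) ≤ (m:ℝ) := by exact_mod_cast hm
    linarith
  simp only [Pi.div_apply]
  have h1 : a*(m:ℝ)+b = (a + b*(1/(m:ℝ)))*m := by field_simp
  have h2 : c*(m:ℝ)+d = (c + d*(1/(m:ℝ)))*m := by field_simp
  rw [h1, h2, mul_div_mul_right _ _ hm0]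

theorem quantization_dimension_discrete (P : MeasureTheory.Measure ℝ)
    (hP : IsCondensation P nuDisc) :
    Filter.Tendsto (fun n : ℕ => 2 * Real.log n / (-Real.log (quantErr P n)))
      Filter.atTop (nhds (2 * Real.log 2 / (Real.log 75 - Real.log 2))) := by
  set L : ℝ := Real.log 75 - Real.log 2 with hL
  have hlog275 : Real.log (2/75 : ℝ) = -L := by
    rw [Real.log_div (by norm_num) (by norm_num), hL]; ring
  have hlog2pos : 0 < Real.log 2 := Real.log_pos (by norm_num)
  have hL3 : Real.log 3 < L := by
    have h1 : Real.log 3 < Real.log 37.5 := Real.log_lt_log (by norm_num) (by norm_num)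
    have h2 : Real.log 37.5 = L := by
      rw [show (37.5:ℝ) = 75/2 by norm_num, Real.log_div (by norm_num) (by norm_num), hL]
    linarith
  have hLpos : 0 < L := lt_trans (Real.log_pos (by norm_num)) hL3
  -- the log-ratio function
  set R : ℕ → ℝ := fun n => (-Real.log (quantErr P n)) / Real.log n with hR
  -- Nat.log tends to infinity
  have hglim : Tendsto (fun n : ℕ => Nat.log 2 n) atTop atTop := by
    rw [Filter.tendsto_atTop]
    intro b
    filter_upwards [eventually_ge_atTop (2^b)] with n hn
    have hn0 : n ≠ 0 := by
      have : 0 < 2^b := by positivity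
      omega
    exact (Nat.le_log_iff_pow_le (by norm_num) hn0).mpr hn
  -- bounds convergence
  have hlow : Tendsto (fun m : ℕ => (L*m + (-(3*L) - Real.log 3))/(Real.log 2*m + Real.log 2))
      atTop (nhds (L/Real.log 2)) := tendsto_affine_ratio _ _ _ _ (ne_of_gt hlog2pos)
  have hup : Tendsto (fun m : ℕ => (L*m + (3*L + Real.log 8))/(Real.log 2*m + 0))
      atTop (nhds (L/Real.log 2)) := tendsto_affine_ratio _ _ _ _ (ne_of_gt hlog2pos)
  have hlowc := hlow.comp hglim
  have hupc := hup.comp hglim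
  -- squeeze
  have hRlim : Tendsto R atTop (nhds (L/Real.log 2)) := by
    apply tendsto_of_tendsto_of_tendsto_of_le_of_le' hlowc hupc
    · -- lower bound eventually
      filter_upwards [eventually_ge_atTop 32] with n hn
      set m := Nat.log 2 n with hm
      have hn0 : n ≠ 0 := by omega
      have hm5 : 5 ≤ m := by
        have : (2:ℕ)^5 ≤ n := by norm_num; omega
        exact (Nat.le_log_iff_pow_le (by norm_num) hn0).mpr this
      have hmr : (5:ℝ) ≤ (m:ℝ) := by exact_mod_cast hm5
      -- log n bounds
      have h2m : ((2:ℝ))^m ≤ (n:ℝ) := by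
        exact_mod_cast Nat.pow_log_le_self 2 hn0
      have h2m1 : (n:ℝ) < 2^(m+1) := by
        exact_mod_cast Nat.lt_pow_succ_log_self (by norm_num : 1 < 2) n
      have hlogn_low : (m:ℝ)*Real.log 2 ≤ Real.log n := by
        have := Real.log_le_log (by positivity) h2m
        rwa [Real.log_pow] at this
      have hlogn_high : Real.log n ≤ ((m:ℝ)+1)*Real.log 2 := by
        have := Real.log_le_log (by exact_mod_cast Nat.pos_of_ne_zero hn0) h2m1.le
        rw [Real.log_pow] at this
        push_cast at this
        linarith
      have hlognpos : 0 < Real.log n := by nlinarith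
      -- quantErr bounds
      have hVlow : (1/8 : ℝ)*(2/75:ℝ)^(m+3) ≤ quantErr P n := by
        apply quantErr_lower hP (by omega)
        have hstep : n < 2^(m+1) := Nat.lt_pow_succ_log_self (by norm_num) n
        calc 2*n ≤ 2*2^(m+1) := by omega
          _ = 2^(m+2) := by ring
          _ ≤ 2^(m+3) := Nat.pow_le_pow_right (by norm_num) (by omega)
      have hVhigh : quantErr P n ≤ 3*(2/75:ℝ)^(m-3) := by
        have h6 : 6*2^(m-3) ≤ n := by
          have heq : (m-3)+3 = m := by omega
          have : 6*2^(m-3) ≤ 2^3*2^(m-3) := by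
            have : (6:ℕ) ≤ 2^3 := by norm_num
            exact Nat.mul_le_mul_right _ this
          calc 6*2^(m-3) ≤ 2^3*2^(m-3) := this
            _ = 2^m := by rw [← pow_add, show 3+(m-3) = m by omega]
            _ ≤ n := Nat.pow_log_le_self 2 hn0
        calc quantErr P n ≤ quantErr P (6*2^(m-3)) :=
              quantErr_anti P (by
                have : 0 < 2^(m-3) := by positivity
                omega) h6
          _ ≤ 3*(2/75:ℝ)^(m-3) := quantErr_upper hP (m-3)
      have hVpos : 0 < quantErr P n := lt_of_lt_of_le (by positivity) hVlow
      -- D bounds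
      have hcast : ((m-3 : ℕ) : ℝ) = (m:ℝ) - 3 := by
        have : 3 ≤ m := by omega
        push_cast [Nat.cast_sub this]
        ring
      have hDlow : ((m:ℝ)-3)*L - Real.log 3 ≤ -Real.log (quantErr P n) := by
        have h1 := Real.log_le_log hVpos hVhigh
        rw [Real.log_mul (by norm_num) (by positivity), Real.log_pow, hcast, hlog275] at h1
        linarith
      -- ratio lower bound
      have hDlowpos : 0 < ((m:ℝ)-3)*L - Real.log 3 := by nlinarith
      show (L*(m:ℝ) + (-(3*L) - Real.log 3))/(Real.log 2*(m:ℝ) + Real.log 2) ≤ R n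
      rw [hR]
      have hnum_eq : L*(m:ℝ) + (-(3*L) - Real.log 3) = ((m:ℝ)-3)*L - Real.log 3 := by ring
      have hden_eq : Real.log 2*(m:ℝ) + Real.log 2 = ((m:ℝ)+1)*Real.log 2 := by ring
      rw [hnum_eq, hden_eq]
      apply div_le_div₀ (by linarith) hDlow hlognpos hlogn_high
    · -- upper bound eventually
      filter_upwards [eventually_ge_atTop 32] with n hn
      set m := Nat.log 2 n with hm
      have hn0 : n ≠ 0 := by omega
      have hm5 : 5 ≤ m := by
        have : (2:ℕ)^5 ≤ n := by norm_num; omega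
        exact (Nat.le_log_iff_pow_le (by norm_num) hn0).mpr this
      have hmr : (5:ℝ) ≤ (m:ℝ) := by exact_mod_cast hm5
      have h2m : ((2:ℝ))^m ≤ (n:ℝ) := by
        exact_mod_cast Nat.pow_log_le_self 2 hn0
      have hlogn_low : (m:ℝ)*Real.log 2 ≤ Real.log n := by
        have := Real.log_le_log (by positivity) h2m
        rwa [Real.log_pow] at this
      have hmlogpos : 0 < (m:ℝ)*Real.log 2 := by positivity
      have hVlow : (1/8 : ℝ)*(2/75:ℝ)^(m+3) ≤ quantErr P n := by
        apply quantErr_lower hP (by omega)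
        have hstep : n < 2^(m+1) := Nat.lt_pow_succ_log_self (by norm_num) n
        calc 2*n ≤ 2*2^(m+1) := by omega
          _ = 2^(m+2) := by ring
          _ ≤ 2^(m+3) := Nat.pow_le_pow_right (by norm_num) (by omega)
      have hVpos : 0 < quantErr P n := lt_of_lt_of_le (by positivity) hVlow
      have hDhigh : -Real.log (quantErr P n) ≤ ((m:ℝ)+3)*L + Real.log 8 := by
        have h1 := Real.log_le_log (by positivity) hVlow
        rw [Real.log_mul (by norm_num) (by positivity), Real.log_pow, hlog275] at h1
        rw [show (1/8:ℝ) = 8⁻¹ by norm_num, Real.log_inv] at h1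
        push_cast at h1
        linarith
      show R n ≤ (L*(m:ℝ) + (3*L + Real.log 8))/(Real.log 2*(m:ℝ) + 0)
      rw [hR]
      have hnum_eq : L*(m:ℝ) + (3*L + Real.log 8) = ((m:ℝ)+3)*L + Real.log 8 := by ring
      have hden_eq : Real.log 2*(m:ℝ) + 0 = (m:ℝ)*Real.log 2 := by ring
      rw [hnum_eq, hden_eq]
      have hDnonneg : 0 ≤ ((m:ℝ)+3)*L + Real.log 8 := by
        have h8 : 0 < Real.log 8 := Real.log_pos (by norm_num)
        nlinarith
      apply div_le_div₀ hDnonneg hDhigh hmlogpos hlogn_low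
  -- conclude
  have hbpos : 0 < L/Real.log 2 := by positivity
  have hfinal : Tendsto (fun n : ℕ => 2 / R n) atTop (nhds (2/(L/Real.log 2))) :=
    tendsto_const_nhds.div hRlim (ne_of_gt hbpos)
  have heq1 : (fun n : ℕ => 2 * Real.log n / (-Real.log (quantErr P n)))
      = fun n : ℕ => 2 / R n := by
    funext n
    rw [hR, div_div_eq_mul_div]
  have heq2 : 2/(L/Real.log 2) = 2 * Real.log 2 / L := by
    rw [div_div_eq_mul_div]
  rw [heq1]
  rw [← heq2]
  exact hfinal
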